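/- Let n ≥ 2, 0 < β < n, and 1 < p < q < ∞ with 1/p − 1/q = β/n. For the function f₀(x) = (1 + |x|^{qβ})^{-(1 + n/(qβ))} on ℝⁿ one has the equality ‖H_β f₀‖_{L^q(ℝⁿ)} = C_{p,q,n,β} · ‖f₀‖_{L^p(ℝⁿ)}, where C_{p,q,n,β} = (p'/q)^{1/q} · ((n/(qβ)) · B(n/(qβ), n/(q'β)))^{-β/n}; in particular C_{p,q,n,β} is the operator norm of H_β from L^p(ℝⁿ) to L^q(ℝⁿ). -/

import Mathlib

open MeasureTheory Metric Set

noncomputable section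

/-- Euclidean space ℝⁿ. -/
abbrev Euc (n : ℕ) := EuclideanSpace ℝ (Fin n)

/-- Volume of the unit ball in ℝⁿ: Ω_n = π^(n/2) / Γ(1 + n/2). -/
def ballVol (n : ℕ) : ℝ := Real.pi ^ ((n : ℝ) / 2) / Real.Gamma (1 + (n : ℝ) / 2)

/-- Surface measure of the unit sphere S^{n-1}: ω_n = 2π^(n/2) / Γ(n/2). -/
def sphArea (n : ℕ) : ℝ := 2 * Real.pi ^ ((n : ℝ) / 2) / Real.Gamma ((n : ℝ) / 2)

/-- The surface measure dθ on the unit sphere S^{n-1} ⊂ ℝⁿ (total mass ω_n = n·Ω_n). -/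
def sphereMeasure (n : ℕ) : Measure (sphere (0 : Euc n) 1) :=
  (volume : Measure (Euc n)).toSphere

/-- Mixed radial-angular norm
‖f‖ = (∫₀^∞ (∫_{S^{n-1}} |f(rθ)|^{p̄} dθ)^{p/p̄} r^{n-1} dr)^{1/p}. -/
def mixedNorm (n : ℕ) (p pb : ℝ) (f : Euc n → ℝ) : ℝ :=
  (∫ r in Ioi (0 : ℝ),
      (∫ θ, |f (r • (θ : Euc n))| ^ pb ∂(sphereMeasure n)) ^ (p / pb) * r ^ ((n : ℝ) - 1)) ^ (1 / p)

/-- Weak mixed radial-angular norm: sup_{λ>0} λ‖χ_{|f|>λ}‖. -/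
def wMixedNorm (n : ℕ) (p pb : ℝ) (f : Euc n → ℝ) : ℝ :=
  ⨆ l : {l : ℝ // 0 < l},
    l.1 * mixedNorm n p pb (indicator {x | l.1 < |f x|} fun _ => (1 : ℝ))

/-- n-dimensional Hardy operator H f(x) = (Ω_n |x|ⁿ)⁻¹ ∫_{|y|<|x|} f(y) dy. -/
def hardyOp (n : ℕ) (f : Euc n → ℝ) (x : Euc n) : ℝ :=
  (ballVol n * ‖x‖ ^ n)⁻¹ * ∫ y in {y : Euc n | ‖y‖ < ‖x‖}, f y

/-- Dual Hardy operator H* f(x) = ∫_{|y|≥|x|} f(y)/(Ω_n |y|ⁿ) dy. -/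
def dualHardyOp (n : ℕ) (f : Euc n → ℝ) (x : Euc n) : ℝ :=
  ∫ y in {y : Euc n | ‖x‖ ≤ ‖y‖}, f y / (ballVol n * ‖y‖ ^ n)

/-- Fractional Hardy operator H_β f(x) = (Ω_n^{1/n}|x|)^{β-n} ∫_{|y|<|x|} f(y) dy. -/
def fracHardyOp (n : ℕ) (β : ℝ) (f : Euc n → ℝ) (x : Euc n) : ℝ :=
  (ballVol n ^ ((1 : ℝ) / n) * ‖x‖) ^ (-((n : ℝ) - β)) * ∫ y in {y : Euc n | ‖y‖ < ‖x‖}, f y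

/-- L^p norm on ℝⁿ. -/
def lpNorm (n : ℕ) (p : ℝ) (f : Euc n → ℝ) : ℝ := (∫ x : Euc n, |f x| ^ p) ^ (1 / p)

/-- Beta function B(a,b) = ∫₀¹ t^{a-1}(1-t)^{b-1} dt. -/
def betaFn (a b : ℝ) : ℝ := ∫ t in (0 : ℝ)..1, t ^ (a - 1) * (1 - t) ^ (b - 1)

/-- Sharp constant C_{p,q,n,β} = (p'/q)^{1/q}((n/(qβ))·B(n/(qβ), n/(q'β)))^{-β/n}. -/
def fracHardyConst (p q : ℝ) (n : ℕ) (β : ℝ) : ℝ :=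
  (p / (p - 1) / q) ^ (1 / q) *
    ((n / (q * β)) * betaFn ((n : ℝ) / (q * β)) ((n : ℝ) / ((q / (q - 1)) * β))) ^ (-(β / (n : ℝ)))


/-!
Write `c = qβ`. The radial antiderivative of `r^{n-1} (1 + r^c)^{-(1 + n/c)}` is
`r^n (1 + r^c)^{-n/c} / n`, so `f₀` has the closed-form transform
`H_β f₀(x) = Ω_n^{β/n} |x|^β (1 + |x|^c)^{-n/c}`. Polar coordinates and the substitution
`u = r^c` turn both `‖f₀‖_p^p` and `‖H_β f₀‖_q^q` into Beta integrals
`c ∫₀^∞ r^{ca-1} (1 + r^c)^{-(a+b)} dr = B(a, b)`, with `(a, b) = (n/c, n/(q'β))` and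
`(a + 1, b - 1)` respectively; `B(a + 1, b - 1) = a/(b - 1) · B(a, b)` and `a/(b - 1) = p'/q`
then produce the constant. As `f₀` attains the bound, no smaller constant bounds `H_β`.
-/

lemma ofReal_betaFn (a b : ℝ) : (betaFn a b : ℂ) = Complex.betaIntegral a b := by
  rw [Complex.betaIntegral, betaFn, ← intervalIntegral.integral_ofReal]
  refine intervalIntegral.integral_congr fun t ht => ?_
  rw [uIcc_of_le zero_le_one] at ht
  rw [Complex.ofReal_mul, Complex.ofReal_cpow ht.1, Complex.ofReal_cpow (sub_nonneg.mpr ht.2)]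
  push_cast
  ring

lemma betaFn_eq_beta {a b : ℝ} (ha : 0 < a) (hb : 0 < b) :
    betaFn a b = ProbabilityTheory.beta a b := by
  rw [ProbabilityTheory.beta_eq_betaIntegralReal a b ha hb, ← ofReal_betaFn, Complex.ofReal_re]

lemma betaFn_pos {a b : ℝ} (ha : 0 < a) (hb : 0 < b) : 0 < betaFn a b :=
  betaFn_eq_beta ha hb ▸ ProbabilityTheory.beta_pos ha hb

lemma betaFn_add_one_sub_one {a b : ℝ} (ha : 0 < a) (hb : 1 < b) :
    betaFn (a + 1) (b - 1) = a / (b - 1) * betaFn a b := by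
  have hb1 : 0 < b - 1 := sub_pos.mpr hb
  have hΓb : Real.Gamma b = (b - 1) * Real.Gamma (b - 1) := by
    simpa using Real.Gamma_add_one hb1.ne'
  rw [betaFn_eq_beta (by linarith) hb1, betaFn_eq_beta ha (by linarith), ProbabilityTheory.beta,
    ProbabilityTheory.beta, Real.Gamma_add_one ha.ne', hΓb, show a + 1 + (b - 1) = a + b by ring]
  field_simp

lemma image_div_one_sub_Ioo_zero_one : (fun t : ℝ => t / (1 - t)) '' Ioo 0 1 = Ioi 0 := by
  ext u
  constructor
  · rintro ⟨t, ⟨ht0, ht1⟩, rfl⟩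
    exact div_pos ht0 (by linarith)
  · intro (hu : 0 < u)
    refine ⟨u / (1 + u), ⟨by positivity, (div_lt_one (by positivity)).mpr (by linarith)⟩, ?_⟩
    field_simp
    ring

lemma betaFn_eq_integral_Ioi (a b : ℝ) :
    betaFn a b = ∫ u in Ioi (0 : ℝ), u ^ (a - 1) * (1 + u) ^ (-(a + b)) := by
  have hderiv : ∀ t ∈ Ioo (0 : ℝ) 1,
      HasDerivWithinAt (fun t : ℝ => t / (1 - t)) (1 / (1 - t) ^ 2) (Ioo 0 1) t := by
    intro t ⟨_, ht1⟩
    have h1 : (1 : ℝ) - t ≠ 0 := by linarith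
    have : HasDerivAt (fun t : ℝ => t / (1 - t)) ((1 * (1 - t) - t * (0 - 1)) / (1 - t) ^ 2) t :=
      (hasDerivAt_id t).div ((hasDerivAt_const t 1).sub (hasDerivAt_id t)) h1
    exact this.hasDerivWithinAt.congr_deriv (by ring)
  have hinj : InjOn (fun t : ℝ => t / (1 - t)) (Ioo 0 1) := by
    intro t₁ ⟨_, h₁⟩ t₂ ⟨_, h₂⟩ h
    have e₁ : (1 : ℝ) - t₁ ≠ 0 := by linarith
    have e₂ : (1 : ℝ) - t₂ ≠ 0 := by linarith
    field_simp at h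
    linarith
  rw [← image_div_one_sub_Ioo_zero_one, integral_image_eq_integral_abs_deriv_smul measurableSet_Ioo hderiv hinj, betaFn,
    intervalIntegral.integral_of_le zero_le_one, integral_Ioc_eq_integral_Ioo]
  refine setIntegral_congr_fun measurableSet_Ioo fun t ⟨ht0, ht1⟩ => ?_
  have hs : (0 : ℝ) < 1 - t := by linarith
  have hsum : (1 : ℝ) + t / (1 - t) = (1 - t)⁻¹ := by field_simp; ring
  rw [smul_eq_mul, hsum, Real.inv_rpow hs.le, Real.rpow_neg hs.le, inv_inv,
    Real.div_rpow ht0.le hs.le, abs_of_pos (by positivity), one_div,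
    ← Real.rpow_natCast, ← Real.rpow_neg hs.le, div_eq_mul_inv, ← Real.rpow_neg hs.le]
  have hexp : (1 - t) ^ (-((2 : ℕ) : ℝ)) * (1 - t) ^ (-(a - 1)) * (1 - t) ^ (a + b)
      = (1 - t) ^ (b - 1) := by
    rw [← Real.rpow_add hs, ← Real.rpow_add hs]
    ring_nf
  linear_combination (-(t ^ (a - 1))) * hexp

lemma betaFn_eq_integral_Ioi_rpow (a b : ℝ) {c : ℝ} (hc : 0 < c) :
    betaFn a b = c * ∫ r in Ioi (0 : ℝ), r ^ (c * a - 1) * (1 + r ^ c) ^ (-(a + b)) := by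
  rw [betaFn_eq_integral_Ioi, ← integral_comp_rpow_Ioi _ hc.ne', ← integral_const_mul]
  refine setIntegral_congr_fun measurableSet_Ioi fun r (hr : 0 < r) => ?_
  have hpow : r ^ (c - 1) * (r ^ c) ^ (a - 1) = r ^ (c * a - 1) := by
    rw [← Real.rpow_mul hr.le, ← Real.rpow_add hr]
    ring_nf
  rw [smul_eq_mul, abs_of_pos hc, ← hpow]
  ring

lemma ballVol_pos (n : ℕ) : 0 < ballVol n :=
  div_pos (Real.rpow_pos_of_pos Real.pi_pos _) (Real.Gamma_pos_of_pos (by positivity))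

lemma measureReal_ball_zero_one {n : ℕ} (hn : 0 < n) :
    (volume : Measure (Euc n)).real (ball 0 1) = ballVol n := by
  have : Nonempty (Fin n) := ⟨⟨0, hn⟩⟩
  rw [measureReal_def, EuclideanSpace.volume_ball, ENNReal.toReal_mul, ENNReal.toReal_pow,
    ENNReal.toReal_ofReal zero_le_one, one_pow, one_mul, ENNReal.toReal_ofReal (by positivity),
    ballVol, Fintype.card_fin, Real.sqrt_eq_rpow, ← Real.rpow_natCast, ← Real.rpow_mul Real.pi_pos.le,
    add_comm]
  ring_nf

lemma integral_fun_norm {n : ℕ} (hn : 0 < n) (g : ℝ → ℝ) :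
    ∫ x : Euc n, g ‖x‖ = n * ballVol n * ∫ r in Ioi (0 : ℝ), r ^ ((n : ℝ) - 1) * g r := by
  have : Nontrivial (Euc n) := Module.nontrivial_of_finrank_pos (R := ℝ) (by simpa using hn)
  rw [integral_fun_norm_addHaar, finrank_euclideanSpace_fin, measureReal_ball_zero_one hn,
    nsmul_eq_mul, smul_eq_mul, mul_assoc]
  congr 2
  refine setIntegral_congr_fun measurableSet_Ioi fun r _ => ?_
  rw [smul_eq_mul, ← Real.rpow_natCast, Nat.cast_sub hn, Nat.cast_one]

lemma setIntegral_norm_lt {n : ℕ} (hn : 0 < n) (g : ℝ → ℝ) (R : ℝ) :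
    ∫ y in {y : Euc n | ‖y‖ < R}, g ‖y‖
      = n * ballVol n * ∫ r in Ioo (0 : ℝ) R, r ^ ((n : ℝ) - 1) * g r := by
  have hind : ∀ y : Euc n, {y : Euc n | ‖y‖ < R}.indicator (fun y => g ‖y‖) y
      = (Iio R).indicator g ‖y‖ := fun y => rfl
  have hind' : ∀ r : ℝ, r ^ ((n : ℝ) - 1) * (Iio R).indicator g r
      = (Iio R).indicator (fun r => r ^ ((n : ℝ) - 1) * g r) r := fun r => by
    by_cases h : r ∈ Iio R <;> simp [h]
  rw [← integral_indicator (measurableSet_lt measurable_norm measurable_const)]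
  simp_rw [hind, integral_fun_norm hn, hind']
  rw [setIntegral_indicator measurableSet_Iio, Ioi_inter_Iio]

lemma integral_norm_rpow_mul_one_add_rpow {n : ℕ} (hn : 0 < n) {c : ℝ} (hc : 0 < c) (a b : ℝ) :
    ∫ x : Euc n, ‖x‖ ^ (c * a - n) * (1 + ‖x‖ ^ c) ^ (-(a + b))
      = n * ballVol n / c * betaFn a b := by
  rw [integral_fun_norm hn fun r => r ^ (c * a - n) * (1 + r ^ c) ^ (-(a + b)),
    betaFn_eq_integral_Ioi_rpow a b hc]
  have hpow : ∫ r in Ioi (0 : ℝ), r ^ ((n : ℝ) - 1) * (r ^ (c * a - n) * (1 + r ^ c) ^ (-(a + b)))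
      = ∫ r in Ioi (0 : ℝ), r ^ (c * a - 1) * (1 + r ^ c) ^ (-(a + b)) := by
    refine setIntegral_congr_fun measurableSet_Ioi fun r (hr : 0 < r) => ?_
    rw [← mul_assoc, ← Real.rpow_add hr]
    ring_nf
  rw [hpow]
  field_simp

def hardyExtremal (n : ℕ) (c : ℝ) (x : Euc n) : ℝ := (1 + ‖x‖ ^ c) ^ (-(1 + (n : ℝ) / c))

lemma continuous_hardyExtremal (n : ℕ) {c : ℝ} (hc : 0 < c) : Continuous (hardyExtremal n c) :=
  (continuous_const.add (continuous_norm.rpow_const fun _ => Or.inr hc.le)).rpow_const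
    fun x => Or.inl (show (1 : ℝ) + ‖x‖ ^ c ≠ 0 by positivity)

lemma hardyExtremal_nonneg (n : ℕ) (c : ℝ) (x : Euc n) : 0 ≤ hardyExtremal n c x :=
  Real.rpow_nonneg (by positivity) _

lemma hasDerivAt_pow_mul_one_add_rpow {n : ℕ} (hn : 0 < n) {c r : ℝ} (hc : 0 < c) (hr : 0 < r) :
    HasDerivAt (fun r : ℝ => r ^ n * (1 + r ^ c) ^ (-((n : ℝ) / c)) / n)
      (r ^ ((n : ℝ) - 1) * (1 + r ^ c) ^ (-(1 + (n : ℝ) / c))) r := by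
  have hpos : 0 < 1 + r ^ c := by positivity
  have hinner : HasDerivAt (fun r : ℝ => 1 + r ^ c) (c * r ^ (c - 1)) r := by
    simpa using (Real.hasDerivAt_rpow_const (p := c) (Or.inl hr.ne')).const_add 1
  have hF := ((hasDerivAt_pow n r).mul
    ((Real.hasDerivAt_rpow_const (p := -((n : ℝ) / c)) (Or.inl hpos.ne')).comp r hinner)).div_const
    (n : ℝ)
  refine hF.congr_deriv ?_
  have hsplit : (1 + r ^ c) ^ (-((n : ℝ) / c)) = (1 + r ^ c) ^ (-(1 + (n : ℝ) / c)) * (1 + r ^ c) := by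
    rw [← Real.rpow_add_one hpos.ne']
    ring_nf
  have hpow : r ^ n * r ^ (c - 1) = r ^ ((n : ℝ) - 1) * r ^ c := by
    rw [← Real.rpow_natCast, ← Real.rpow_add hr, ← Real.rpow_add hr]
    ring_nf
  have hpow' : (r ^ (n - 1) : ℝ) = r ^ ((n : ℝ) - 1) := by
    rw [← Real.rpow_natCast, Nat.cast_sub hn, Nat.cast_one]
  have hn' : (n : ℝ) ≠ 0 := Nat.cast_ne_zero.mpr hn.ne'
  rw [Function.comp_apply, hsplit, hpow', show -((n : ℝ) / c) - 1 = -(1 + n / c) by ring]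
  field_simp
  linear_combination -hpow

lemma integral_Ioo_rpow_mul_one_add_rpow {n : ℕ} (hn : 0 < n) {c R : ℝ} (hc : 0 < c)
    (hR : 0 < R) :
    ∫ r in Ioo (0 : ℝ) R, r ^ ((n : ℝ) - 1) * (1 + r ^ c) ^ (-(1 + (n : ℝ) / c))
      = R ^ n * (1 + R ^ c) ^ (-((n : ℝ) / c)) / n := by
  have hbase : ∀ r ∈ Icc (0 : ℝ) R, 1 + r ^ c ≠ 0 := fun r hr =>
    (add_pos_of_pos_of_nonneg one_pos (Real.rpow_nonneg hr.1 c)).ne'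
  have hcont : ContinuousOn (fun r : ℝ => 1 + r ^ c) (Icc 0 R) :=
    continuousOn_const.add (continuousOn_id.rpow_const fun _ _ => Or.inr hc.le)
  have hFTC := intervalIntegral.integral_eq_sub_of_hasDeriv_right_of_le hR.le
    (((continuousOn_pow n).mul (hcont.rpow_const fun r hr => Or.inl (hbase r hr))).div_const _)
    (fun r hr => (hasDerivAt_pow_mul_one_add_rpow hn hc hr.1).hasDerivWithinAt)
    ((((continuousOn_id.rpow_const fun _ _ => Or.inr (sub_nonneg.mpr (Nat.one_le_cast.mpr hn))) :
        ContinuousOn (fun r : ℝ => r ^ ((n : ℝ) - 1)) (Icc 0 R)).mul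
      (hcont.rpow_const fun r hr => Or.inl (hbase r hr))).intervalIntegrable_of_Icc hR.le)
  rw [intervalIntegral.integral_of_le hR.le, integral_Ioc_eq_integral_Ioo] at hFTC
  rw [hFTC]
  simp [zero_pow hn.ne']

lemma setIntegral_norm_lt_hardyExtremal {n : ℕ} (hn : 0 < n) {c R : ℝ} (hc : 0 < c)
    (hR : 0 < R) :
    ∫ y in {y : Euc n | ‖y‖ < R}, hardyExtremal n c y
      = ballVol n * R ^ n * (1 + R ^ c) ^ (-((n : ℝ) / c)) := by
  unfold hardyExtremal
  rw [setIntegral_norm_lt hn (fun r => (1 + r ^ c) ^ (-(1 + (n : ℝ) / c))),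
    integral_Ioo_rpow_mul_one_add_rpow hn hc hR]
  field_simp

lemma fracHardyOp_hardyExtremal {n : ℕ} (hn : 0 < n) {β c : ℝ} (hβ : β ≠ 0) (hc : 0 < c)
    (x : Euc n) :
    fracHardyOp n β (hardyExtremal n c) x
      = ballVol n ^ (β / n) * ‖x‖ ^ β * (1 + ‖x‖ ^ c) ^ (-((n : ℝ) / c)) := by
  have hΩ := ballVol_pos n
  rcases (norm_nonneg x).eq_or_lt with h0 | hR
  · have hempty : {y : Euc n | ‖y‖ < 0} = ∅ := by
      ext y
      simp
    simp [fracHardyOp, ← h0, hempty, Real.zero_rpow hβ]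
  · have hΩpow : ballVol n ^ ((1 : ℝ) / n * -(n - β)) * ballVol n = ballVol n ^ (β / n) := by
      rw [← Real.rpow_add_one hΩ.ne']
      congr 1
      field_simp
      ring
    have hRpow : ‖x‖ ^ (-((n : ℝ) - β)) * ‖x‖ ^ (n : ℝ) = ‖x‖ ^ β := by
      rw [← Real.rpow_add hR]
      ring_nf
    rw [fracHardyOp, setIntegral_norm_lt_hardyExtremal hn hc hR,
      Real.mul_rpow (Real.rpow_nonneg hΩ.le _) hR.le, ← Real.rpow_mul hΩ.le,
      ← Real.rpow_natCast ‖x‖ n, ← hΩpow, ← hRpow]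
    ring

lemma integral_abs_hardyExtremal_rpow {n : ℕ} (hn : 0 < n) {c : ℝ} (hc : 0 < c) (p : ℝ) :
    ∫ x : Euc n, |hardyExtremal n c x| ^ p
      = n * ballVol n / c * betaFn (n / c) (p * (1 + n / c) - n / c) := by
  rw [← integral_norm_rpow_mul_one_add_rpow hn hc]
  congr 1
  ext x
  rw [abs_of_nonneg (hardyExtremal_nonneg n c x), hardyExtremal, ← Real.rpow_mul (by positivity),
    mul_div_cancel₀ _ hc.ne', sub_self, Real.rpow_zero, one_mul]
  ring_nf

lemma integral_abs_fracHardyOp_hardyExtremal_rpow {n : ℕ} (hn : 0 < n) {β c : ℝ} (hβ : β ≠ 0)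
    (hc : 0 < c) (q : ℝ) :
    ∫ x : Euc n, |fracHardyOp n β (hardyExtremal n c) x| ^ q
      = ballVol n ^ (q * β / n) *
          (n * ballVol n / c * betaFn (n / c + q * β / c) (q * (n / c) - (n / c + q * β / c))) := by
  have hΩ := ballVol_pos n
  rw [← integral_norm_rpow_mul_one_add_rpow hn hc, ← integral_const_mul]
  congr 1
  ext x
  have hbase : 0 < 1 + ‖x‖ ^ c := by positivity
  have hnorm : β * q = c * (n / c + q * β / c) - n := by
    field_simp
    ring
  rw [fracHardyOp_hardyExtremal hn hβ hc, abs_of_nonneg (by positivity),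
    Real.mul_rpow (by positivity) (Real.rpow_nonneg hbase.le _),
    Real.mul_rpow (Real.rpow_nonneg hΩ.le _) (by positivity), ← Real.rpow_mul hΩ.le,
    ← Real.rpow_mul (norm_nonneg x), ← Real.rpow_mul hbase.le, hnorm]
  ring_nf

lemma natCast_div_mul_eq_div_sub {n : ℕ} (hn : 0 < n) {β p q : ℝ} (hβ : 0 < β) (hp : 0 < p)
    (hpq : p < q) (hscal : 1 / p - 1 / q = β / n) :
    (n : ℝ) / (q * β) = p / (q - p) := by
  have hq : 0 < q := hp.trans hpq
  have hkey : (q - p) * n = β * (p * q) := by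
    field_simp at hscal
    linarith
  rw [div_eq_div_iff (by positivity) (by linarith)]
  linear_combination hkey

lemma natCast_div_div_sub_one_mul (n : ℕ) (β q : ℝ) :
    (n : ℝ) / (q / (q - 1) * β) = (q - 1) * (n / (q * β)) := by
  rw [div_mul_eq_mul_div, div_div_eq_mul_div]
  ring

lemma rpow_mul_mul_one_div_eq {Ω M r s q : ℝ} (hΩ : 0 < Ω) (hM : 0 < M) (hr : 0 ≤ r)
    (hq : q ≠ 0) :
    (Ω ^ (q * s) * (r * (Ω * M))) ^ (1 / q) = r ^ (1 / q) * M ^ (-s) * (Ω * M) ^ (s + 1 / q) := by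
  rw [Real.rpow_add (mul_pos hΩ hM), Real.mul_rpow hΩ.le hM.le,
    Real.mul_rpow (Real.rpow_nonneg hΩ.le _) (by positivity), Real.mul_rpow hr (mul_pos hΩ hM).le,
    ← Real.rpow_mul hΩ.le, show q * s * (1 / q) = s by field_simp, Real.rpow_neg hM.le]
  field_simp

theorem lpNorm_fracHardyOp_hardyExtremal {n : ℕ} (hn : 0 < n) {β p q : ℝ} (hβ : 0 < β)
    (hp : 1 < p) (hpq : p < q) (hscal : 1 / p - 1 / q = β / n) :
    lpNorm n q (fracHardyOp n β (hardyExtremal n (q * β)))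
      = fracHardyConst p q n β * lpNorm n p (hardyExtremal n (q * β)) := by
  have hc : 0 < q * β := mul_pos (by linarith) hβ
  set a := (n : ℝ) / (q * β) with ha_def
  set b := (n : ℝ) / (q / (q - 1) * β)
  have ha : a = p / (q - p) := natCast_div_mul_eq_div_sub hn hβ (by linarith) hpq hscal
  have hb : b = (q - 1) * a := natCast_div_div_sub_one_mul n β q
  have ha0 : 0 < a := by rw [ha]; exact div_pos (by linarith) (by linarith)
  have hb_sub_one : b - 1 = q * (p - 1) / (q - p) := by
    rw [hb, ha]
    field_simp [(by linarith : q - p ≠ 0)]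
    ring
  have hb1 : 1 < b := sub_pos.mp (hb_sub_one ▸ div_pos (by nlinarith) (by linarith))
  have hNp : ∫ x, |hardyExtremal n (q * β) x| ^ p = ballVol n * (a * betaFn a b) := by
    rw [integral_abs_hardyExtremal_rpow hn hc, show p * (1 + a) - a = b by
      rw [hb, ha]; field_simp [(by linarith : q - p ≠ 0)]; ring]
    ring
  have hNq : ∫ x, |fracHardyOp n β (hardyExtremal n (q * β)) x| ^ q
      = ballVol n ^ (q * (β / n)) * (p / (p - 1) / q * (ballVol n * (a * betaFn a b))) := by
    rw [integral_abs_fracHardyOp_hardyExtremal_rpow hn hβ.ne' hc, div_self hc.ne',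
      show (n : ℝ) * ballVol n / (q * β) = ballVol n * a by rw [ha_def]; ring,
      show q * a - (a + 1) = b - 1 by rw [hb]; ring, betaFn_add_one_sub_one ha0 hb1,
      show a / (b - 1) = p / (p - 1) / q by
        rw [hb_sub_one, ha]; field_simp [(by linarith : q - p ≠ 0), (by linarith : p - 1 ≠ 0)],
      mul_div_assoc q β]
    ring
  have h1p : 1 / p = β / n + 1 / q := by linarith
  rw [_root_.lpNorm, _root_.lpNorm, hNq, hNp, h1p,
    rpow_mul_mul_one_div_eq (ballVol_pos n) (mul_pos ha0 (betaFn_pos ha0 (by linarith)))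
      (div_nonneg (div_nonneg (by linarith) (by linarith)) (by linarith)) (by linarith)]
  rfl

lemma lpNorm_hardyExtremal_pos {n : ℕ} (hn : 0 < n) {c p : ℝ} (hc : 0 < c) (hp : 1 ≤ p) :
    0 < lpNorm n p (hardyExtremal n c) := by
  have ha : 0 < (n : ℝ) / c := by positivity
  have hb : 0 < p * (1 + n / c) - n / c := by nlinarith
  rw [_root_.lpNorm, integral_abs_hardyExtremal_rpow hn hc]
  exact Real.rpow_pos_of_pos (mul_pos (by have := ballVol_pos n; positivity) (betaFn_pos ha hb)) _

theorem fracHardy_lp_extremal_general (n : ℕ) (hn : 2 ≤ n) (β p q : ℝ)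
    (hβ0 : 0 < β) (hp : 1 < p) (hpq : p < q)
    (hscal : 1 / p - 1 / q = β / n) :
    lpNorm n q (fracHardyOp n β fun x => (1 + ‖x‖ ^ (q * β)) ^ (-(1 + (n : ℝ) / (q * β))))
        = fracHardyConst p q n β *
          lpNorm n p (fun x => (1 + ‖x‖ ^ (q * β)) ^ (-(1 + (n : ℝ) / (q * β)))) ∧
      ∀ C : ℝ, 0 ≤ C →
        (∀ f : Euc n → ℝ, (∀ x, 0 ≤ f x) → Measurable f →
          lpNorm n q (fracHardyOp n β f) ≤ C * lpNorm n p f) →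
        fracHardyConst p q n β ≤ C := by
  have hn0 : 0 < n := by omega
  have hc : 0 < q * β := mul_pos (by linarith) hβ0
  have hextremal := lpNorm_fracHardyOp_hardyExtremal hn0 hβ0 hp hpq hscal
  refine ⟨hextremal, fun C _ hbound => ?_⟩
  have hle := hbound (hardyExtremal n (q * β)) (hardyExtremal_nonneg n _)
    (continuous_hardyExtremal n hc).measurable
  rw [hextremal] at hle
  exact le_of_mul_le_mul_right hle (lpNorm_hardyExtremal_pos hn0 hc hp.le)

/-- extremality of f₀(x) = (1+|x|^{qβ})^{-(1+n/(qβ))} and sharpness of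
C_{p,q,n,β} as the L^p → L^q operator norm of H_β. -/
theorem fracHardy_lp_extremal (n : ℕ) (hn : 2 ≤ n) (β p q : ℝ)
    (hβ0 : 0 < β) (hβn : β < n) (hp : 1 < p) (hpq : p < q)
    (hscal : 1 / p - 1 / q = β / n) :
    lpNorm n q (fracHardyOp n β fun x => (1 + ‖x‖ ^ (q * β)) ^ (-(1 + (n : ℝ) / (q * β))))
        = fracHardyConst p q n β *
          lpNorm n p (fun x => (1 + ‖x‖ ^ (q * β)) ^ (-(1 + (n : ℝ) / (q * β)))) ∧
      ∀ C : ℝ, 0 ≤ C →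
        (∀ f : Euc n → ℝ, (∀ x, 0 ≤ f x) → Measurable f →
          lpNorm n q (fracHardyOp n β f) ≤ C * lpNorm n p f) →
        fracHardyConst p q n β ≤ C :=
  fracHardy_lp_extremal_general n hn β p q hβ0 hp hpq hscal

end
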